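/- (Proposition 3.1.) Let η be an integrable real random variable on (Ω, B, P) and F a sub-σ-algebra of B; set ν = E[η | F]. Suppose P(|η| ≥ t) ≤ R(t) for all t ≥ 0, where R is non-negative, bounded by 1, non-increasing, measurable with R(t) → 0 as t → ∞, and define δ(p) = (p ∫₀^∞ t^{p−1} R(t) dt)^{1/p}, assumed finite for p ∈ (1, b) for some b ∈ (1, ∞]. Then ‖ν‖_{L^p(P)} ≤ δ(p) for every p ∈ (1, b) (i.e. ‖ν‖Gδ ≤ 1), and consequently P(|ν| ≥ t) ≤ exp(−v*(ln t)) for all t ≥ e, where v(p) = p ln δ(p) and v*(u) = sup_{p∈(1,b)}(pu − v(p)). -/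

import Mathlib

/-!
Conditional expectation is a contraction on every `Lᵖ`, `p ≥ 1`, so it suffices to bound
`‖η‖_p`. The layer-cake formula `E|η|ᵖ = p ∫₀^∞ t^{p-1} P(|η| ≥ t) dt` together with the tail
bound gives `‖η‖_p ≤ δ(p)`. Markov's inequality then yields
`P(|ν| ≥ t) ≤ (δ(p)/t)ᵖ = exp(-(p ln t - p ln δ(p)))` for every admissible `p`, and the
infimum over `p` of these bounds is `exp(-v*(ln t))`.
-/

open MeasureTheory Real ENNReal

section

variable {Ω : Type*} {mΩ : MeasurableSpace Ω} {μ : Measure Ω}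

theorem eLpNorm_le_of_meas_le_abs_le {f : Ω → ℝ} (hf : AEMeasurable f μ) {R : ℝ → ℝ}
    (hR : Measurable R) (htail : ∀ t : ℝ, 0 ≤ t → μ {ω | t ≤ |f ω|} ≤ ENNReal.ofReal (R t))
    {p : ℝ} (hp : 0 < p) :
    eLpNorm f (ENNReal.ofReal p) μ ≤
      (ENNReal.ofReal p *
        ∫⁻ t in Set.Ioi (0 : ℝ), ENNReal.ofReal (t ^ (p - 1) * R t)) ^ (1 / p) := by
  rw [eLpNorm_eq_lintegral_rpow_enorm_toReal (by simpa using hp) ofReal_ne_top,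
    toReal_ofReal hp.le]
  gcongr ?_ ^ _
  have layer_cake := lintegral_rpow_eq_lintegral_meas_le_mul μ
    (Filter.Eventually.of_forall fun ω => abs_nonneg (f ω)) hf.abs hp
  calc ∫⁻ ω, ‖f ω‖ₑ ^ p ∂μ = ∫⁻ ω, ENNReal.ofReal (|f ω| ^ p) ∂μ := by
        simp only [Real.enorm_eq_ofReal_abs, ofReal_rpow_of_nonneg (abs_nonneg _) hp.le]
    _ = ENNReal.ofReal p *
          ∫⁻ t in Set.Ioi 0, μ {ω | t ≤ |f ω|} * ENNReal.ofReal (t ^ (p - 1)) := layer_cake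
    _ ≤ ENNReal.ofReal p * ∫⁻ t in Set.Ioi 0, ENNReal.ofReal (t ^ (p - 1) * R t) := by
        gcongr ENNReal.ofReal p * ?_
        refine setLIntegral_mono (by fun_prop) fun t (ht : 0 < t) => ?_
        rw [mul_comm, ENNReal.ofReal_mul (rpow_nonneg ht.le _)]
        gcongr
        exact htail t ht.le

theorem rpow_div_le_exp_neg_mul_log_sub {c t p : ℝ} (hc : 0 ≤ c) (ht : 0 < t) (hp : 0 < p) :
    (c / t) ^ p ≤ exp (-(p * log t - p * log c)) := by
  rcases hc.eq_or_lt with rfl | hc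
  · rw [zero_div, zero_rpow hp.ne']
    exact (exp_pos _).le
  · rw [rpow_def_of_pos (div_pos hc ht), log_div hc.ne' ht.ne']
    exact le_of_eq (congrArg exp (by ring))

theorem meas_le_abs_le_exp_of_eLpNorm_le {f : Ω → ℝ} (hf : AEStronglyMeasurable f μ)
    {p : ℝ} (hp : 0 < p) {C : ℝ≥0∞} (hC : C ≠ ⊤) (hfC : eLpNorm f (ENNReal.ofReal p) μ ≤ C)
    {t : ℝ} (ht : 0 < t) :
    μ {ω | t ≤ |f ω|} ≤ ENNReal.ofReal (exp (-(p * log t - p * log C.toReal))) := by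
  have markov := meas_ge_le_mul_pow_eLpNorm_enorm μ (by simpa using hp) ofReal_ne_top hf
    (ofReal_pos.2 ht).ne' (by simp)
  simp only [Real.enorm_eq_ofReal_abs, ofReal_le_ofReal_iff (abs_nonneg _),
    toReal_ofReal hp.le] at markov
  calc μ {ω | t ≤ |f ω|}
      ≤ (ENNReal.ofReal t)⁻¹ ^ p * eLpNorm f (ENNReal.ofReal p) μ ^ p := markov
    _ ≤ (ENNReal.ofReal t)⁻¹ ^ p * C ^ p := by gcongr
    _ = ENNReal.ofReal ((C.toReal / t) ^ p) := by
        rw [← ofReal_rpow_of_nonneg (by positivity) hp.le, div_eq_mul_inv, ofReal_mul toReal_nonneg,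
          ofReal_toReal hC, ofReal_inv_of_pos ht, mul_rpow_of_nonneg _ _ hp.le, mul_comm]
    _ ≤ _ := ofReal_le_ofReal (rpow_div_le_exp_neg_mul_log_sub toReal_nonneg ht hp)

theorem le_ofReal_exp_neg_sSup {a : ℝ≥0∞} (ha : a ≤ 1) {S : Set ℝ}
    (h : ∀ y ∈ S, a ≤ ENNReal.ofReal (exp (-y))) : a ≤ ENNReal.ofReal (exp (-sSup S)) := by
  have ha_top : a ≠ ⊤ := ne_top_of_le_ne_top one_ne_top ha
  rcases (toReal_nonneg (a := a)).eq_or_lt with ha0 | ha0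
  · rw [(toReal_eq_zero_iff a).1 ha0.symm |>.resolve_right ha_top]
    exact zero_le
  -- No nonemptiness or boundedness of `S` is needed: the junk value `sSup S = 0`
  -- is below `-log a ≥ 0`.
  have hsSup : sSup S ≤ -log a.toReal := by
    refine Real.sSup_le (fun y hy => ?_) ?_
    · have := (le_ofReal_iff_toReal_le ha_top (exp_pos _).le).1 (h y hy)
      linarith [(log_le_iff_le_exp ha0).2 this]
    · exact neg_nonneg.2 (log_nonpos toReal_nonneg (toReal_le_of_le_ofReal zero_le_one
        (by simpa using ha)))
  rw [le_ofReal_iff_toReal_le ha_top (exp_pos _).le, ← exp_log ha0]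
  exact exp_le_exp.2 (by linarith)

end

theorem conditional_expectation_grand_lebesgue_estimate_general
    {Ω : Type*} [mΩ : MeasurableSpace Ω] (P : Measure Ω) [IsProbabilityMeasure P]
    (F : MeasurableSpace Ω)
    (η : Ω → ℝ) (hη : Integrable η P)
    (R : ℝ → ℝ)
    (hRmeas : Measurable R)
    (htail : ∀ t : ℝ, 0 ≤ t → P {ω | t ≤ |η ω|} ≤ ENNReal.ofReal (R t))
    (δ : ℝ → ℝ≥0∞)
    (hδ : ∀ p : ℝ, δ p =
      (ENNReal.ofReal p *
        ∫⁻ t in Set.Ioi (0 : ℝ), ENNReal.ofReal (t ^ (p - 1) * R t)) ^ (1 / p))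
    (b : ℝ≥0∞)
    (hfin : ∀ p : ℝ, 1 < p → ENNReal.ofReal p < b → δ p < ⊤) :
    (∀ p : ℝ, 1 < p → ENNReal.ofReal p < b →
      eLpNorm (P[η|F]) (ENNReal.ofReal p) P ≤ δ p) ∧
    (∀ t : ℝ, Real.exp 1 ≤ t →
      P {ω | t ≤ |(P[η|F]) ω|} ≤ ENNReal.ofReal
        (Real.exp
          (- sSup {y : ℝ | ∃ p : ℝ, 1 < p ∧ ENNReal.ofReal p < b ∧
              y = p * Real.log t - p * Real.log (δ p).toReal}))) := by
  -- `F` is itself a local instance, so the ambient σ-algebra `mΩ` is passed explicitly.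
  have lp_bound : ∀ p : ℝ, 1 < p → ENNReal.ofReal p < b →
      eLpNorm (P[η|F]) (ENNReal.ofReal p) P ≤ δ p := fun p hp _ =>
    calc eLpNorm (P[η|F]) (ENNReal.ofReal p) P ≤ eLpNorm η (ENNReal.ofReal p) P :=
          eLpNorm_condExp_le_eLpNorm (m := F) (m0 := mΩ) η (by simpa using hp.le)
      _ ≤ δ p := hδ p ▸ eLpNorm_le_of_meas_le_abs_le hη.aemeasurable hRmeas htail
          (zero_lt_one.trans hp)
  refine ⟨lp_bound, fun t ht => le_ofReal_exp_neg_sSup prob_le_one ?_⟩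
  rintro y ⟨p, hp, hpb, rfl⟩
  exact meas_le_abs_le_exp_of_eLpNorm_le
    (integrable_condExp (m := F) (m₀ := mΩ)).aestronglyMeasurable (zero_lt_one.trans hp)
    (hfin p hp hpb).ne (lp_bound p hp hpb) ((exp_pos 1).trans_le ht)

/-- Proposition 3.1: let `η` be integrable with tail `P(|η| ≥ t) ≤ R(t)`, where `R`
is non-negative, bounded by 1, non-increasing and `R(t) → 0`, and let
`δ(p) = (p ∫₀^∞ t^{p−1} R(t) dt)^{1/p}` be finite for `p ∈ (1,b)`, `b ∈ (1,∞]`.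
Then the conditional expectation `ν = E[η|F]` satisfies `‖ν‖_{L^p(P)} ≤ δ(p)` for
every `p ∈ (1,b)` (i.e. `‖ν‖Gδ ≤ 1`), and consequently
`P(|ν| ≥ t) ≤ exp(−v*(ln t))` for `t ≥ e`, where `v(p) = p ln δ(p)` and
`v*(u) = sup_{p∈(1,b)}(pu − v(p))`. -/
theorem conditional_expectation_grand_lebesgue_estimate
    {Ω : Type*} [mΩ : MeasurableSpace Ω] (P : Measure Ω) [IsProbabilityMeasure P]
    (F : MeasurableSpace Ω) (hF : F ≤ mΩ)
    (η : Ω → ℝ) (hη : Integrable η P)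
    (R : ℝ → ℝ)
    (hRmeas : Measurable R)
    (hRnonneg : ∀ t, 0 ≤ R t) (hRle : ∀ t, R t ≤ 1)
    (hRanti : Antitone R)
    (hRlim : Filter.Tendsto R Filter.atTop (nhds 0))
    (htail : ∀ t : ℝ, 0 ≤ t → P {ω | t ≤ |η ω|} ≤ ENNReal.ofReal (R t))
    (δ : ℝ → ℝ≥0∞)
    (hδ : ∀ p : ℝ, δ p =
      (ENNReal.ofReal p *
        ∫⁻ t in Set.Ioi (0 : ℝ), ENNReal.ofReal (t ^ (p - 1) * R t)) ^ (1 / p))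
    (b : ℝ≥0∞) (hb : 1 < b)
    (hfin : ∀ p : ℝ, 1 < p → ENNReal.ofReal p < b → δ p < ⊤) :
    (∀ p : ℝ, 1 < p → ENNReal.ofReal p < b →
      eLpNorm (P[η|F]) (ENNReal.ofReal p) P ≤ δ p) ∧
    (∀ t : ℝ, Real.exp 1 ≤ t →
      P {ω | t ≤ |(P[η|F]) ω|} ≤ ENNReal.ofReal
        (Real.exp
          (- sSup {y : ℝ | ∃ p : ℝ, 1 < p ∧ ENNReal.ofReal p < b ∧
              y = p * Real.log t - p * Real.log (δ p).toReal}))) :=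
  conditional_expectation_grand_lebesgue_estimate_general (mΩ := mΩ) P F η hη R hRmeas htail δ hδ b
    hfin
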